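/- The sequence ln I(n)/v(n) converges as n → ∞ to a limit S, and for every integer m ≥ 1, 0 < S − 3^{−m}·( ln 4 + (2/3)·ln pc(m) ) < 3^{−m}·( (β(m)−1)/4 + γ(m)^3/96 ). -/

import Mathlib

/-- One step of the recursion for the ice-model boundary counts
`(pa, pb, pc, pd)` on the Sierpinski gasket `SG(n)`. -/
def iceStep : ℕ × ℕ × ℕ × ℕ → ℕ × ℕ × ℕ × ℕ
  | (a, b, c, d) =>
    ((a + b) ^ 2 * (a + 3 * c + d),
     (a + b) ^ 2 * (b + 3 * c + d),
     a ^ 2 * b + b ^ 2 * a + (3 * c + d) ^ 3,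
     a ^ 3 + b ^ 3 + (3 * c + d) ^ 3)

/-- The quadruple `(pa(n), pb(n), pc(n), pd(n))`. -/
def iceSeq : ℕ → ℕ × ℕ × ℕ × ℕ
  | 0 => (0, 1, 0, 1)
  | n + 1 => iceStep (iceSeq n)

def pa (n : ℕ) : ℕ := (iceSeq n).1
def pb (n : ℕ) : ℕ := (iceSeq n).2.1
def pc (n : ℕ) : ℕ := (iceSeq n).2.2.1
def pd (n : ℕ) : ℕ := (iceSeq n).2.2.2

noncomputable def alphaSeq (n : ℕ) : ℝ := (pa n : ℝ) / (pb n : ℝ)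
noncomputable def betaSeq (n : ℕ) : ℝ := (pd n : ℝ) / (pc n : ℝ)
noncomputable def gammaSeq (n : ℕ) : ℝ := (pb n : ℝ) / (pc n : ℝ)

/-- The number of ice-model configurations on `SG(n)`. -/
def iceI (n : ℕ) : ℕ := 6 * pa n + 6 * pb n + 6 * pc n + 2 * pd n

/-- The number of vertices of `SG(n)` (the division is exact). -/
def vSG (n : ℕ) : ℕ := 3 * (3 ^ n + 1) / 2

open Filter Topology Real

/-!
Since `8 pc(n) ≤ I(n) ≤ 34 pc(n)` and `v(n) = 3 (3^n + 1) / 2`, the quotient `log I(n) / v(n)`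
differs by `O(3^{-n})` from `t(n) = 3^{-n} (log 4 + 2/3 log pc(n)) = 2/3 · log (8 pc(n)) / 3^n`.
The dominant term `(3 pc + pd)^3 ≥ (4 pc)^3` of the recursion gives `pc(n+1) > 64 pc(n)^3`, so `t`
increases strictly, by `2/9 · 3^{-n} log (pc(n+1) / (64 pc(n)^3))` at each step. Bounding this
logarithm by `x - 1`, the defect `E(n) = (β(n) - 1)/4 + γ(n)^3/96` satisfies
`2/9 · log (pc(n+1) / (64 pc(n)^3)) + E(n+1)/3 < E(n)`, i.e. `t(n) + 3^{-n} E(n)` decreases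
strictly. From `n = 2` on the quadruple stays in the regime `pa ≤ pb`, `2 pb ≤ pc ≤ pd ≤ 21/20 pc`,
where this is an elementary polynomial estimate; `n = 1` is checked numerically.
The limit `S` is squeezed strictly between the two monotone sequences.
-/

theorem exists_tendsto_of_strictMono_of_strictAnti {t u : ℕ → ℝ} (ht : StrictMono t)
    (hu : StrictAnti u) (htu : ∀ n, t n ≤ u n) :
    ∃ S, Tendsto t atTop (𝓝 S) ∧ ∀ n, t n < S ∧ S < u n := by
  have hbdd : BddAbove (Set.range t) :=
    ⟨u 0, by rintro _ ⟨n, rfl⟩; exact (htu n).trans (hu.antitone n.zero_le)⟩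
  refine ⟨⨆ n, t n, tendsto_atTop_ciSup ht.monotone hbdd, fun n =>
    ⟨(ht n.lt_succ_self).trans_le (le_ciSup hbdd _), ?_⟩⟩
  refine (ciSup_le fun k => ?_).trans_lt (hu n.lt_succ_self)
  calc t k ≤ t (max k (n + 1)) := ht.monotone (le_max_left _ _)
    _ ≤ u (max k (n + 1)) := htu _
    _ ≤ u (n + 1) := hu.antitone (le_max_right _ _)

section StepBounds

variable {a b c d : ℝ}

theorem sq_mul_add_sq_mul_le_cube_add (ha : 0 ≤ a) (hb : 0 ≤ b) :
    a ^ 2 * b + b ^ 2 * a ≤ a ^ 3 + b ^ 3 := by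
  nlinarith [mul_nonneg (add_nonneg ha hb) (sq_nonneg (a - b))]

theorem cube_add_sub_sq_mul_add_sq_mul_le (ha : 0 ≤ a) (hab : a ≤ b) :
    a ^ 3 + b ^ 3 - (a ^ 2 * b + b ^ 2 * a) ≤ b ^ 3 := by
  nlinarith [mul_nonneg (mul_nonneg ha (sub_nonneg.2 hab)) (show 0 ≤ a + b by linarith)]

theorem sq_mul_add_sq_mul_le_two_mul_cube (ha : 0 ≤ a) (hab : a ≤ b) :
    a ^ 2 * b + b ^ 2 * a ≤ 2 * b ^ 3 := by
  nlinarith [mul_nonneg (mul_nonneg (ha.trans hab) (sub_nonneg.2 hab))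
    (show 0 ≤ a + 2 * b by linarith)]

theorem cube_three_mul_add_sub_le (hc : 0 ≤ c) (hcd : c ≤ d) (hdc : 20 * d ≤ 21 * c) :
    (3 * c + d) ^ 3 - 64 * c ^ 3 ≤ 49 * (d - c) * c ^ 2 := by
  have he : 0 ≤ d - c := sub_nonneg.2 hcd
  nlinarith [mul_nonneg (mul_nonneg he (show 0 ≤ c - 20 * (d - c) by linarith))
    (show 0 ≤ c + 8 * (d - c) by linarith), pow_nonneg he 3]

theorem add_sq_mul_add_le (ha : 0 ≤ a) (hab : a ≤ b) (hbc : 2 * b ≤ c) (hdc : 20 * d ≤ 21 * c) :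
    (a + b) ^ 2 * (b + 3 * c + d) ≤ 16 * b * c ^ 2 := by
  have hb : 0 ≤ b := ha.trans hab
  have hc : 0 ≤ c := by linarith
  have h1 : (a + b) ^ 2 ≤ 2 * b * c := by nlinarith
  have h2 : b + 3 * c + d ≤ 8 * c := by linarith
  calc (a + b) ^ 2 * (b + 3 * c + d) ≤ (a + b) ^ 2 * (8 * c) := by gcongr
    _ ≤ (2 * b * c) * (8 * c) := by gcongr
    _ = 16 * b * c ^ 2 := by ring

end StepBounds

noncomputable def iceDefect (b c d : ℝ) : ℝ := (d / c - 1) / 4 + (b / c) ^ 3 / 96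

theorem iceDefect_nonneg {b c d : ℝ} (hb : 0 ≤ b) (hc : 0 < c) (hcd : c ≤ d) :
    0 ≤ iceDefect b c d := by
  have : 0 ≤ d / c - 1 := by rwa [sub_nonneg, one_le_div hc]
  unfold iceDefect
  positivity

theorem two_div_nine_mul_log_add_iceDefect_lt {b c d B C D : ℝ} (hb : 0 < b) (hc : 0 < c)
    (hcd : c ≤ d) (hB : 0 ≤ B) (hC : 64 * c ^ 3 ≤ C)
    (hCc : C - 64 * c ^ 3 ≤ 49 * (d - c) * c ^ 2 + 2 * b ^ 3) (hDC : D - C ≤ b ^ 3)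
    (hBb : B ≤ 16 * b * c ^ 2) :
    2 / 9 * log (C / (64 * c ^ 3)) + iceDefect B C D / 3 < iceDefect b c d := by
  -- With `x = d / c - 1` and `y = (b / c) ^ 3` the left side is at most `49/288 x + 153/18432 y`.
  have hc3 : 0 < 64 * c ^ 3 := by positivity
  have hC0 : 0 < C := hc3.trans_le hC
  have hX : 0 ≤ d / c - 1 := by rwa [sub_nonneg, one_le_div hc]
  have hY : 0 < (b / c) ^ 3 := by positivity
  have hlog : log (C / (64 * c ^ 3)) ≤ 49 / 64 * (d / c - 1) + (b / c) ^ 3 / 32 :=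
    calc log (C / (64 * c ^ 3)) ≤ C / (64 * c ^ 3) - 1 := log_le_sub_one_of_pos (by positivity)
      _ = (C - 64 * c ^ 3) / (64 * c ^ 3) := by field_simp
      _ ≤ (49 * (d - c) * c ^ 2 + 2 * b ^ 3) / (64 * c ^ 3) := by gcongr
      _ = 49 / 64 * (d / c - 1) + (b / c) ^ 3 / 32 := by field_simp; ring
  have hD : D / C - 1 ≤ (b / c) ^ 3 / 64 :=
    calc D / C - 1 = (D - C) / C := by field_simp
      _ ≤ b ^ 3 / (64 * c ^ 3) := div_le_div₀ (by positivity) hDC hc3 hC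
      _ = (b / c) ^ 3 / 64 := by field_simp
  have hBC : B / C ≤ b / c / 4 :=
    calc B / C ≤ 16 * b * c ^ 2 / (64 * c ^ 3) := div_le_div₀ (by positivity) hBb hc3 hC
      _ = b / c / 4 := by field_simp; ring
  have hB3 : (B / C) ^ 3 ≤ (b / c) ^ 3 / 64 :=
    calc (B / C) ^ 3 ≤ (b / c / 4) ^ 3 := by gcongr
      _ = (b / c) ^ 3 / 64 := by ring
  unfold iceDefect
  linarith

theorem pb_succ (n : ℕ) : pb (n + 1) = (pa n + pb n) ^ 2 * (pb n + 3 * pc n + pd n) := rfl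

theorem pc_succ (n : ℕ) :
    pc (n + 1) = pa n ^ 2 * pb n + pb n ^ 2 * pa n + (3 * pc n + pd n) ^ 3 := rfl

theorem pd_succ (n : ℕ) : pd (n + 1) = pa n ^ 3 + pb n ^ 3 + (3 * pc n + pd n) ^ 3 := rfl

/-- Fails at `n = 1`, where `(pa, pb, pc, pd) = (1, 2, 1, 2)`; holds from `n = 2` on. -/
def IceRegular : ℕ × ℕ × ℕ × ℕ → Prop
  | (a, b, c, d) => 0 < a ∧ a ≤ b ∧ 0 < c ∧ c ≤ d ∧ 2 * b ≤ c ∧ 20 * d ≤ 21 * c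

theorem IceRegular.iceStep {q : ℕ × ℕ × ℕ × ℕ} (h : IceRegular q) : IceRegular (iceStep q) := by
  obtain ⟨a, b, c, d⟩ := q
  obtain ⟨ha, hab, hc, hcd, hbc, hdc⟩ := h
  have ha' : (0 : ℝ) ≤ a := by positivity
  have hab' : (a : ℝ) ≤ b := by exact_mod_cast hab
  have hcd' : (c : ℝ) ≤ d := by exact_mod_cast hcd
  have hbc' : 2 * (b : ℝ) ≤ c := by exact_mod_cast hbc
  have hdc' : 20 * (d : ℝ) ≤ 21 * c := by exact_mod_cast hdc
  have hcube : 64 * (c : ℝ) ^ 3 ≤ (3 * c + d) ^ 3 :=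
    calc 64 * (c : ℝ) ^ 3 = (4 * (c : ℝ)) ^ 3 := by ring
      _ ≤ (3 * (c : ℝ) + d) ^ 3 := by gcongr; linarith
  refine ⟨by positivity, by gcongr, by positivity, ?_, ?_, ?_⟩
  · have : a ^ 2 * b + b ^ 2 * a ≤ a ^ 3 + b ^ 3 := by
      exact_mod_cast sq_mul_add_sq_mul_le_cube_add ha' (ha'.trans hab')
    exact Nat.add_le_add_right this _
  · suffices (2 * ((a + b) ^ 2 * (b + 3 * c + d)) : ℝ) ≤
        a ^ 2 * b + b ^ 2 * a + (3 * c + d) ^ 3 by exact_mod_cast this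
    nlinarith [add_sq_mul_add_le ha' hab' hbc' hdc',
      mul_le_mul_of_nonneg_right hbc' (sq_nonneg (c : ℝ))]
  · suffices (20 * (a ^ 3 + b ^ 3 + (3 * c + d) ^ 3) : ℝ) ≤
        21 * (a ^ 2 * b + b ^ 2 * a + (3 * c + d) ^ 3) by exact_mod_cast this
    have hb3 : 8 * (b : ℝ) ^ 3 ≤ c ^ 3 :=
      calc 8 * (b : ℝ) ^ 3 = (2 * b) ^ 3 := by ring
        _ ≤ (c : ℝ) ^ 3 := by gcongr
    nlinarith [cube_add_sub_sq_mul_add_sq_mul_le ha' hab']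

theorem iceSeq_regular {n : ℕ} (hn : 2 ≤ n) :
    0 < pa n ∧ pa n ≤ pb n ∧ 0 < pc n ∧ pc n ≤ pd n ∧
      2 * pb n ≤ pc n ∧ 20 * pd n ≤ 21 * pc n := by
  induction n, hn using Nat.le_induction with
  | base => decide
  | succ n _ ih => exact IceRegular.iceStep ih

theorem iceSeq_bounds {n : ℕ} (hn : 1 ≤ n) :
    0 < pa n ∧ pa n ≤ pb n ∧ pb n ≤ 2 * pc n ∧ 0 < pc n ∧ pc n ≤ pd n ∧ pd n ≤ 2 * pc n := by
  obtain rfl | hn := hn.eq_or_lt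
  · decide
  · obtain ⟨ha, hab, hc, hcd, hbc, hdc⟩ := iceSeq_regular hn
    exact ⟨ha, hab, by omega, hc, hcd, by omega⟩

theorem pc_succ_gt {n : ℕ} (hn : 1 ≤ n) : 64 * pc n ^ 3 < pc (n + 1) := by
  obtain ⟨ha, hab, -, -, hcd, -⟩ := iceSeq_bounds hn
  have hcube : 64 * pc n ^ 3 ≤ (3 * pc n + pd n) ^ 3 :=
    calc 64 * pc n ^ 3 = (4 * pc n) ^ 3 := by ring
      _ ≤ (3 * pc n + pd n) ^ 3 := by gcongr; omega
  have : 0 < pa n ^ 2 * pb n := by have := ha.trans_le hab; positivity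
  rw [pc_succ]
  omega

theorem iceDefect_succ_lt {n : ℕ} (hn : 1 ≤ n) :
    2 / 9 * log (pc (n + 1) / (64 * pc n ^ 3)) +
        iceDefect (pb (n + 1)) (pc (n + 1)) (pd (n + 1)) / 3 <
      iceDefect (pb n) (pc n) (pd n) := by
  obtain rfl | hn := hn.eq_or_lt
  · have hlog : log (131 / 64 : ℝ) ≤ 131 / 64 - 1 := log_le_sub_one_of_pos (by norm_num)
    norm_num [iceDefect, show pb 1 = 2 from rfl, show pc 1 = 1 from rfl, show pd 1 = 2 from rfl,
      show pb 2 = 63 from rfl, show pc 2 = 131 from rfl, show pd 2 = 134 from rfl]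
    linarith
  obtain ⟨ha, hab, hc, hcd, hbc, hdc⟩ := iceSeq_regular hn
  have ha' : (0 : ℝ) ≤ pa n := by positivity
  have hab' : (pa n : ℝ) ≤ pb n := by exact_mod_cast hab
  have hb' : (0 : ℝ) < pb n := by exact_mod_cast ha.trans_le hab
  have hc' : (0 : ℝ) < pc n := by exact_mod_cast hc
  have hcd' : (pc n : ℝ) ≤ pd n := by exact_mod_cast hcd
  have hbc' : 2 * (pb n : ℝ) ≤ pc n := by exact_mod_cast hbc
  have hdc' : 20 * (pd n : ℝ) ≤ 21 * pc n := by exact_mod_cast hdc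
  refine two_div_nine_mul_log_add_iceDefect_lt hb' hc' hcd'
    (by positivity) (by exact_mod_cast (pc_succ_gt hn.le).le) ?_ ?_ ?_
  · rw [pc_succ]
    push_cast
    linarith [cube_three_mul_add_sub_le hc'.le hcd' hdc',
      sq_mul_add_sq_mul_le_two_mul_cube ha' hab']
  · rw [pc_succ, pd_succ]
    push_cast
    linarith [cube_add_sub_sq_mul_add_sq_mul_le ha' hab']
  · rw [pb_succ]
    push_cast
    exact add_sq_mul_add_le ha' hab' hbc' hdc'

noncomputable def entropyLower (n : ℕ) : ℝ := ((3 : ℝ) ^ n)⁻¹ * (log 4 + 2 / 3 * log (pc n))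

noncomputable def entropyUpper (n : ℕ) : ℝ :=
  entropyLower n + ((3 : ℝ) ^ n)⁻¹ * iceDefect (pb n) (pc n) (pd n)

theorem entropyLower_succ_sub {n : ℕ} (hn : 1 ≤ n) :
    entropyLower (n + 1) - entropyLower n =
      2 / 9 * ((3 : ℝ) ^ n)⁻¹ * log (pc (n + 1) / (64 * pc n ^ 3)) := by
  have hc : (0 : ℝ) < pc n := by exact_mod_cast (iceSeq_bounds hn).2.2.2.1
  have hc' : (0 : ℝ) < pc (n + 1) := by
    exact_mod_cast (iceSeq_bounds (n.le_succ.trans' hn)).2.2.2.1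
  rw [log_div hc'.ne' (by positivity), log_mul (by norm_num) (by positivity), log_pow,
    show (64 : ℝ) = 4 ^ 3 by norm_num, log_pow, entropyLower, entropyLower, pow_succ]
  field_simp
  ring

theorem entropyLower_succ_strictMono : StrictMono fun n => entropyLower (n + 1) := by
  refine strictMono_nat_of_lt_succ fun n => sub_pos.1 ?_
  rw [entropyLower_succ_sub n.succ_pos]
  have hc : (0 : ℝ) < 64 * pc (n + 1) ^ 3 := by
    have := (iceSeq_bounds n.succ_pos).2.2.2.1
    positivity
  have hgrow : (64 * pc (n + 1) ^ 3 : ℝ) < pc (n + 2) := by exact_mod_cast pc_succ_gt n.succ_pos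
  have := log_pos ((one_lt_div hc).2 hgrow)
  positivity

theorem entropyUpper_succ_strictAnti : StrictAnti fun n => entropyUpper (n + 1) := by
  refine strictAnti_nat_of_succ_lt fun n => sub_neg.1 ?_
  have h := iceDefect_succ_lt (by omega : 1 ≤ n + 1)
  have e : entropyUpper (n + 2) - entropyUpper (n + 1) = ((3 : ℝ) ^ (n + 1))⁻¹ *
      (2 / 9 * log (pc (n + 2) / (64 * pc (n + 1) ^ 3)) +
        iceDefect (pb (n + 2)) (pc (n + 2)) (pd (n + 2)) / 3 -
          iceDefect (pb (n + 1)) (pc (n + 1)) (pd (n + 1))) := by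
    rw [entropyUpper, entropyUpper, pow_succ _ (n + 1)]
    linear_combination entropyLower_succ_sub (by omega : 1 ≤ n + 1)
  rw [e]
  exact mul_neg_of_pos_of_neg (by positivity) (by linarith)

theorem entropyLower_le_entropyUpper {n : ℕ} (hn : 1 ≤ n) : entropyLower n ≤ entropyUpper n := by
  obtain ⟨-, -, -, hc, hcd, -⟩ := iceSeq_bounds hn
  have := iceDefect_nonneg (Nat.cast_nonneg (pb n)) (mod_cast hc : (0 : ℝ) < pc n)
    (mod_cast hcd : (pc n : ℝ) ≤ pd n)
  rw [entropyUpper, le_add_iff_nonneg_right]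
  positivity

theorem vSG_cast (n : ℕ) : (vSG n : ℝ) = 3 * (3 ^ n + 1) / 2 := by
  have h2 : 2 ∣ 3 * (3 ^ n + 1) := (Odd.pow (by decide : Odd 3)).add_one.two_dvd.mul_left 3
  rw [vSG, Nat.cast_div h2 (by norm_num)]
  push_cast
  ring

theorem log_iceI_div_vSG_sub_entropyLower {n : ℕ} (hn : 1 ≤ n) :
    log (iceI n) / vSG n - entropyLower n =
      (2 / 3 * log (iceI n / (8 * pc n)) - entropyLower n) / (3 ^ n + 1) := by
  have hc : 0 < pc n := (iceSeq_bounds hn).2.2.2.1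
  have hI : (0 : ℝ) < iceI n := by unfold iceI; positivity
  have h48 : log 4 = 2 / 3 * log 8 := by
    rw [show (4 : ℝ) = 2 ^ 2 by norm_num, show (8 : ℝ) = 2 ^ 3 by norm_num, log_pow, log_pow]
    push_cast
    ring
  rw [vSG_cast, log_div hI.ne' (by positivity), log_mul (by norm_num) (by positivity),
    entropyLower, h48]
  field_simp
  ring

theorem abs_two_div_three_mul_log_sub_entropyLower_le {n : ℕ} (hn : 1 ≤ n) :
    |2 / 3 * log (iceI n / (8 * pc n)) - entropyLower n| ≤ 3 + entropyUpper 1 := by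
  obtain ⟨-, hab, hbc, hc, hcd, hdc⟩ := iceSeq_bounds hn
  have hc8 : (0 : ℝ) < 8 * pc n := by have : (0 : ℝ) < pc n := mod_cast hc; positivity
  have h8 : (8 * pc n : ℝ) ≤ iceI n := by
    exact_mod_cast (show 8 * pc n ≤ iceI n by unfold iceI; omega)
  have h34 : (iceI n : ℝ) ≤ 34 * pc n := by
    exact_mod_cast (show iceI n ≤ 34 * pc n by unfold iceI; omega)
  have hlog0 : 0 ≤ log (iceI n / (8 * pc n)) := log_nonneg ((one_le_div hc8).2 h8)
  have hlog : log (iceI n / (8 * pc n)) ≤ 13 / 4 :=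
    calc log (iceI n / (8 * pc n)) ≤ iceI n / (8 * pc n) - 1 :=
          log_le_sub_one_of_pos (div_pos (hc8.trans_le h8) hc8)
      _ ≤ 13 / 4 := by rw [sub_le_iff_le_add, div_le_iff₀ hc8]; linarith
  have hL0 : 0 ≤ entropyLower n := by
    have := log_nonneg (Nat.one_le_cast.2 hc : (1 : ℝ) ≤ pc n)
    unfold entropyLower
    positivity
  have hL1 : entropyLower n ≤ entropyUpper 1 := by
    obtain ⟨k, rfl⟩ := Nat.exists_eq_add_of_le' hn
    exact (entropyLower_le_entropyUpper hn).trans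
      (entropyUpper_succ_strictAnti.antitone k.zero_le)
  rw [abs_le]
  constructor <;> linarith

theorem tendsto_log_iceI_div_vSG_sub_entropyLower :
    Tendsto (fun n => log (iceI n) / vSG n - entropyLower n) atTop (𝓝 0) := by
  have hinv : Tendsto (fun n : ℕ => ((3 : ℝ) ^ n + 1)⁻¹) atTop (𝓝 0) :=
    tendsto_inv_atTop_zero.comp (tendsto_atTop_add_const_right _ 1
      (tendsto_pow_atTop_atTop_of_one_lt (by norm_num)))
  refine squeeze_zero_norm' (eventually_atTop.2 ⟨1, fun n hn => ?_⟩)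
    (by simpa using hinv.const_mul (3 + entropyUpper 1))
  rw [log_iceI_div_vSG_sub_entropyLower hn, norm_div, Real.norm_eq_abs, Real.norm_eq_abs,
    abs_of_pos (by positivity : (0 : ℝ) < 3 ^ n + 1), div_eq_mul_inv]
  exact mul_le_mul_of_nonneg_right (abs_two_div_three_mul_log_sub_entropyLower_le hn)
    (by positivity)

theorem stmt_14 :
    ∃ S : ℝ, Filter.Tendsto (fun n => Real.log (iceI n) / (vSG n : ℝ))
        Filter.atTop (nhds S) ∧
      ∀ m : ℕ, 1 ≤ m →
        0 < S - ((3 : ℝ) ^ m)⁻¹ * (Real.log 4 + 2 / 3 * Real.log (pc m)) ∧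
        S - ((3 : ℝ) ^ m)⁻¹ * (Real.log 4 + 2 / 3 * Real.log (pc m)) <
          ((3 : ℝ) ^ m)⁻¹ * ((betaSeq m - 1) / 4 + gammaSeq m ^ 3 / 96) := by
  obtain ⟨S, hlim, hS⟩ := exists_tendsto_of_strictMono_of_strictAnti
    entropyLower_succ_strictMono entropyUpper_succ_strictAnti
    fun n => entropyLower_le_entropyUpper n.succ_pos
  refine ⟨S, ?_, fun m hm => ?_⟩
  · simpa using ((tendsto_add_atTop_iff_nat 1).1 hlim).add
      tendsto_log_iceI_div_vSG_sub_entropyLower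
  · obtain ⟨k, rfl⟩ := Nat.exists_eq_add_of_le' hm
    obtain ⟨hlower, hupper⟩ := hS k
    rw [entropyUpper, entropyLower] at hupper
    rw [entropyLower] at hlower
    exact ⟨sub_pos.2 hlower, by rw [sub_lt_iff_lt_add']; exact hupper⟩
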